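/- Flushing preserves the local view: if u(i) = l · (x,a) (the oldest entry of process i's buffer is (x,a)), then for every memory location y, lookup(u[i:l], d[x:a], i, y) = lookup(u, d, i, y). That is, a flush action by the TSO memory model does not change the values that the flushing process itself can read. -/
import Mathlib


/-- TSO lookup: the value process `i` reads for location `x`, i.e. the most
recently buffered value for `x` in its store buffer (the head of the
projection of `u i` onto pairs with first component `x`) if any,
and the memory value `d x` otherwise. -/
def lookup {n : ℕ} {X D : Type*} [DecidableEq X]
    (u : Fin n → List (X × D)) (d : X → D) (i : Fin n) (x : X) : D :=
  match (u i).filter (fun p => decide (p.1 = x)) with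
  | [] => d x
  | (_, a) :: _ => a

/-- A flush by the TSO memory model does not change the local view of the
flushing process. -/
theorem flush_preserves_local_view {n : ℕ} {X D : Type*} [DecidableEq X]
    (u : Fin n → List (X × D)) (d : X → D) (i : Fin n)
    (x : X) (a : D) (l : List (X × D)) (h : u i = l ++ [(x, a)]) :
    ∀ y : X,
      lookup (Function.update u i l) (Function.update d x a) i y =
        lookup u d i y := by
  intro y
  simp only [lookup, Function.update_self, h, List.filter_append]
  by_cases hxy : x = y
  · subst hxy
    cases hl : l.filter (fun p => decide (p.1 = x)) with
    | nil => simp [hl, Function.update_self]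
    | cons p t => simp [hl]
  · cases hl : l.filter (fun p => decide (p.1 = y)) with
    | nil => simp [hl, hxy, Function.update_of_ne (Ne.symm hxy)]
    | cons p t => simp [hl, hxy]
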